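/- Let H be a finite-dimensional complex Hilbert space, n ≥ 1, and let ρ_n, σ_n ∈ D(H^{⊗n}) be two states. Then the local variation distance is bounded by the normalised Wasserstein distance: ‖ρ_n − σ_n‖_{LV} ≤ (2/n)·‖ρ_n − σ_n‖_{W1}. -/

import Mathlib

open scoped BigOperators ComplexOrder
open Filter Matrix

noncomputable section

namespace AlmostIID

/-- The trace norm `‖A‖₁ = Tr √(A†A)` of a square complex matrix. -/
def traceNorm {m : Type*} [Fintype m] [DecidableEq m] (A : Matrix m m ℂ) : ℝ :=
  (((Matrix.posSemidef_conjTranspose_mul_self A).1.eigenvectorUnitary.1 *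
      diagonal (((↑) : ℝ → ℂ) ∘ (√·) ∘ (Matrix.posSemidef_conjTranspose_mul_self A).1.eigenvalues) *
      (star (Matrix.posSemidef_conjTranspose_mul_self A).1.eigenvectorUnitary : Matrix m m ℂ)).trace).re

/-- A density matrix (state): positive semidefinite with unit trace. -/
def IsState {m : Type*} [Fintype m] (M : Matrix m m ℂ) : Prop :=
  M.PosSemidef ∧ M.trace = 1

/-- The marginal (reduced density matrix) of an `n`-partite operator on the
coordinates in `I`, i.e. the partial trace over the complement of `I`. -/
def marginal {κ : Type*} [Fintype κ] {n : ℕ}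
    (M : Matrix (Fin n → κ) (Fin n → κ) ℂ) (I : Finset (Fin n)) :
    Matrix ({i : Fin n // i ∈ I} → κ) ({i : Fin n // i ∈ I} → κ) ℂ :=
  fun a b => ∑ f : {i : Fin n // i ∉ I} → κ,
    M (fun i => if h : i ∈ I then a ⟨i, h⟩ else f ⟨i, h⟩)
      (fun i => if h : i ∈ I then b ⟨i, h⟩ else f ⟨i, h⟩)

/-- The single-site reduced density matrix on the `i`-th tensor factor. -/
def siteMarginal {κ : Type*} [Fintype κ] {n : ℕ}
    (M : Matrix (Fin n → κ) (Fin n → κ) ℂ) (i : Fin n) : Matrix κ κ ℂ :=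
  fun a b => ∑ f : {j : Fin n // j ≠ i} → κ,
    M (fun j => if h : j = i then a else f ⟨j, h⟩)
      (fun j => if h : j = i then b else f ⟨j, h⟩)

/-- The i.i.d. product state `ρ^{⊗ι}` on the tensor factors indexed by `ι`. -/
def iidOn {κ : Type*} (ι : Type*) [Fintype ι] (ρ : Matrix κ κ ℂ) :
    Matrix (ι → κ) (ι → κ) ℂ :=
  fun a b => ∏ i, ρ (a i) (b i)

/-- The product state `φ 0 ⊗ φ 1 ⊗ ⋯`. -/
def prodState {κ : Type*} {ι : Type*} [Fintype ι] (φ : ι → Matrix κ κ ℂ) :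
    Matrix (ι → κ) (ι → κ) ℂ :=
  fun a b => ∏ i, φ i (a i) (b i)

/-- The quantum Wasserstein norm of order 1 of a difference of states:
the minimum of `Σ cᵢ` over decompositions `X = Σ cᵢ (τ⁽ⁱ⁾ − η⁽ⁱ⁾)` with `cᵢ ≥ 0`,
`τ⁽ⁱ⁾, η⁽ⁱ⁾` states with equal partial traces over the `i`-th factor. -/
def W1 {κ : Type*} [Fintype κ] [DecidableEq κ] {n : ℕ}
    (X : Matrix (Fin n → κ) (Fin n → κ) ℂ) : ℝ :=
  sInf { w : ℝ |
    ∃ (c : Fin n → ℝ) (τ η : Fin n → Matrix (Fin n → κ) (Fin n → κ) ℂ),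
      (∀ i, 0 ≤ c i) ∧ (∀ i, IsState (τ i)) ∧ (∀ i, IsState (η i)) ∧
      (∀ i, marginal (τ i) ({i}ᶜ : Finset (Fin n)) = marginal (η i) ({i}ᶜ : Finset (Fin n))) ∧
      X = ∑ i, c i • (τ i - η i) ∧ w = ∑ i, c i }

/-- The local variation norm. -/
def LV {κ : Type*} [Fintype κ] [DecidableEq κ] {n : ℕ}
    (X : Matrix (Fin n → κ) (Fin n → κ) ℂ) : ℝ :=
  (1/2) * ∑ k ∈ Finset.Icc 1 n, ((2:ℝ)^k)⁻¹ *
    (((n.choose k : ℝ))⁻¹ *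
      ∑ I ∈ Finset.powersetCard k (Finset.univ : Finset (Fin n)),
        traceNorm (marginal X I))

/-!
Let `ρ - σ = Σᵢ cᵢ (τ⁽ⁱ⁾ - η⁽ⁱ⁾)` be a decomposition as in the definition of `W₁`. Since `τ⁽ⁱ⁾`
and `η⁽ⁱ⁾` have the same marginal on `{i}ᶜ`, hence on every `I ∌ i`, the marginal `(ρ - σ)_I`
only sees the terms with `i ∈ I`, so `‖(ρ - σ)_I‖₁ ≤ 2 Σ_{i ∈ I} cᵢ`. Averaging over `|I| = k`
gives `(2k/n) Σᵢ cᵢ`, and `Σₖ k 2⁻ᵏ ≤ 2` bounds `‖ρ - σ‖_{LV}` by `(2/n) Σᵢ cᵢ`.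

The infimum defining `W₁` is over a nonempty set: resetting the tensor factors one by one to a
fixed pure state turns `ρ` and `σ` into the same state, and telescoping along these hybrids is
such a decomposition.
-/

section TraceNorm

open scoped MatrixOrder

variable {m : Type*} [Fintype m] [DecidableEq m]

lemma traceNorm_eq_re_trace_abs (A : Matrix m m ℂ) : traceNorm A = (CFC.abs A).trace.re := by
  have hA := posSemidef_conjTranspose_mul_self A
  rw [CFC.abs, star_eq_conjTranspose, CFC.sqrt_eq_cfc, cfc_nnreal_eq_real _ _ hA.nonneg,
    hA.1.cfc_eq]
  simp [traceNorm, IsHermitian.cfc, Function.comp_def, hA.eigenvalues_nonneg]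

lemma traceNorm_eq_sum_abs_eigenvalues {A : Matrix m m ℂ} (hA : A.IsHermitian) :
    traceNorm A = ∑ i, |hA.eigenvalues i| := by
  rw [traceNorm_eq_re_trace_abs, CFC.abs_eq_cfc_norm A hA.isSelfAdjoint, hA.cfc_eq,
    IsHermitian.cfc, Unitary.conjStarAlgAut_apply, trace_mul_cycle, Unitary.coe_star_mul_self,
    one_mul, trace_diagonal, Complex.re_sum]
  simp

/-- In the eigenbasis of `P - Q`, each eigenvalue is a difference of two nonnegative diagonal
entries of `P` and `Q`. -/
lemma traceNorm_sub_le {P Q : Matrix m m ℂ} (hP : P.PosSemidef) (hQ : Q.PosSemidef) :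
    traceNorm (P - Q) ≤ P.trace.re + Q.trace.re := by
  have hA := hP.1.sub hQ.1
  set U : Matrix m m ℂ := (hA.eigenvectorUnitary : Matrix m m ℂ)
  have hdiag : star U * (P - Q) * U = diagonal (((↑) : ℝ → ℂ) ∘ hA.eigenvalues) := by
    simpa using hA.conjStarAlgAut_star_eigenvectorUnitary
  have htrace (M : Matrix m m ℂ) : (star U * M * U).trace = M.trace := by
    rw [trace_mul_cycle, Unitary.mul_star_self_of_mem hA.eigenvectorUnitary.2, one_mul]
  have hconj {M : Matrix m m ℂ} (hM : M.PosSemidef) (i : m) : 0 ≤ (star U * M * U) i i := by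
    simpa [star_eq_conjTranspose] using (hM.conjTranspose_mul_mul_same U).diag_nonneg
  have heig (i : m) :
      |hA.eigenvalues i| ≤ ((star U * P * U) i i).re + ((star U * Q * U) i i).re := by
    have hi := congrFun₂ hdiag i i
    rw [mul_sub, sub_mul, Matrix.sub_apply, diagonal_apply_eq] at hi
    have hPi := Complex.nonneg_iff.mp (hconj hP i)
    have hQi := Complex.nonneg_iff.mp (hconj hQ i)
    have := congrArg Complex.re hi
    simp only [Complex.sub_re, Function.comp_apply, Complex.ofReal_re] at this
    rw [← this, abs_sub_le_iff]
    constructor <;> linarith [hPi.1, hQi.1]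
  calc traceNorm (P - Q) = ∑ i, |hA.eigenvalues i| := traceNorm_eq_sum_abs_eigenvalues hA
    _ ≤ ∑ i, (((star U * P * U) i i).re + ((star U * Q * U) i i).re) :=
        Finset.sum_le_sum fun i _ => heig i
    _ = P.trace.re + Q.trace.re := by
      rw [Finset.sum_add_distrib, ← htrace P, ← htrace Q, trace, trace, Complex.re_sum,
        Complex.re_sum]
      rfl

end TraceNorm

section States

lemma IsState.half_smul_add {m : Type*} [Fintype m] {A B : Matrix m m ℂ} (hA : IsState A)
    (hB : IsState B) : IsState ((2⁻¹ : ℝ) • (A + B)) := by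
  refine ⟨(hA.1.add hB.1).smul (by norm_num), ?_⟩
  rw [trace_smul, trace_add, hA.2, hB.2, Complex.real_smul]
  norm_num

lemma re_trace_sum_smul_of_isState {m ι : Type*} [Fintype m] (s : Finset ι) (c : ι → ℝ)
    {θ : ι → Matrix m m ℂ} (hθ : ∀ i ∈ s, IsState (θ i)) :
    (∑ i ∈ s, c i • θ i).trace.re = ∑ i ∈ s, c i := by
  rw [trace_sum, Complex.re_sum]
  refine Finset.sum_congr rfl fun i hi => ?_
  rw [trace_smul, (hθ i hi).2, Complex.real_smul, mul_one, Complex.ofReal_re]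

lemma eq_of_trace_eq_of_apply_eq_zero {m α : Type*} [Fintype m] [AddCommMonoid α]
    {A B : Matrix m m α} (c : m) (hA : ∀ g h, (g, h) ≠ (c, c) → A g h = 0)
    (hB : ∀ g h, (g, h) ≠ (c, c) → B g h = 0) (htr : A.trace = B.trace) : A = B := by
  have htrace {M : Matrix m m α} (hM : ∀ g h, (g, h) ≠ (c, c) → M g h = 0) : M.trace = M c c :=
    Finset.sum_eq_single c (fun g _ hg => hM g g (by simpa using hg)) (by simp)
  ext g h
  by_cases hgh : (g, h) = (c, c)
  · obtain ⟨rfl, rfl⟩ := Prod.mk.inj hgh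
    rw [← htrace hA, ← htrace hB, htr]
  · rw [hA g h hgh, hB g h hgh]

end States

section Marginal

variable {κ : Type*} [Fintype κ] {n : ℕ}

lemma marginal_apply_eq_sum_marginal {I J : Finset (Fin n)} (hIJ : I ⊆ J)
    (M : Matrix (Fin n → κ) (Fin n → κ) ℂ) (a b : {i // i ∈ I} → κ) :
    marginal M I a b = ∑ g : {x : {i // i ∉ I} // x.1 ∈ J} → κ,
      marginal M J (fun j => if h : j.1 ∈ I then a ⟨j, h⟩ else g ⟨⟨j, h⟩, j.2⟩)
        (fun j => if h : j.1 ∈ I then b ⟨j, h⟩ else g ⟨⟨j, h⟩, j.2⟩) := by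
  let σ : {x : {i // i ∉ I} // x.1 ∉ J} ≃ {i // i ∉ J} :=
    { toFun := fun x => ⟨x.1.1, x.2⟩
      invFun := fun i => ⟨⟨i.1, fun h => i.2 (hIJ h)⟩, i.2⟩ }
  rw [marginal, ← (Equiv.piEquivPiSubtypeProd (fun x : {i // i ∉ I} => x.1 ∈ J) _).symm.sum_comp,
    Fintype.sum_prod_type]
  refine Finset.sum_congr rfl fun g _ => ?_
  rw [marginal, ← (σ.arrowCongr (Equiv.refl κ)).symm.sum_comp]
  refine Finset.sum_congr rfl fun f _ => ?_
  congr 1 <;> funext i <;> by_cases hI : i ∈ I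
  all_goals first
    | simp [hI, hIJ hI]
    | by_cases hJ : i ∈ J <;> simp [hI, hJ, σ, Equiv.piEquivPiSubtypeProd]

lemma marginal_eq_of_subset {I J : Finset (Fin n)} (hIJ : I ⊆ J)
    {M N : Matrix (Fin n → κ) (Fin n → κ) ℂ} (h : marginal M J = marginal N J) :
    marginal M I = marginal N I := by
  ext a b
  simp only [marginal_apply_eq_sum_marginal hIJ, h]

lemma marginal_eq_sum_submatrix (M : Matrix (Fin n → κ) (Fin n → κ) ℂ) (I : Finset (Fin n)) :
    marginal M I = ∑ f, M.submatrix (fun a => (Equiv.piEquivPiSubtypeProd (· ∈ I) _).symm (a, f))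
      (fun a => (Equiv.piEquivPiSubtypeProd (· ∈ I) _).symm (a, f)) := by
  ext a b
  simp only [marginal, Matrix.sum_apply, submatrix_apply]
  rfl

lemma posSemidef_marginal {M : Matrix (Fin n → κ) (Fin n → κ) ℂ} (hM : M.PosSemidef)
    (I : Finset (Fin n)) : (marginal M I).PosSemidef := by
  rw [marginal_eq_sum_submatrix]
  exact posSemidef_sum _ fun f _ => hM.submatrix _

lemma trace_marginal (M : Matrix (Fin n → κ) (Fin n → κ) ℂ) (I : Finset (Fin n)) :
    (marginal M I).trace = M.trace := by
  rw [marginal_eq_sum_submatrix, trace_sum]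
  simp only [trace, diag, submatrix_apply]
  rw [Finset.sum_comm]
  exact (Fintype.sum_prod_type' _).symm.trans
    ((Equiv.piEquivPiSubtypeProd (· ∈ I) _).symm.sum_comp fun u => M u u)

lemma IsState.marginal {M : Matrix (Fin n → κ) (Fin n → κ) ℂ} (hM : IsState M)
    (I : Finset (Fin n)) : IsState (marginal M I) :=
  ⟨posSemidef_marginal hM.1 I, (trace_marginal M I).trans hM.2⟩

lemma marginal_add (M N : Matrix (Fin n → κ) (Fin n → κ) ℂ) (I : Finset (Fin n)) :
    marginal (M + N) I = marginal M I + marginal N I := by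
  ext a b
  simp [marginal, Finset.sum_add_distrib]

lemma marginal_sub (M N : Matrix (Fin n → κ) (Fin n → κ) ℂ) (I : Finset (Fin n)) :
    marginal (M - N) I = marginal M I - marginal N I := by
  ext a b
  simp [marginal, Finset.sum_sub_distrib]

lemma marginal_smul (r : ℝ) (M : Matrix (Fin n → κ) (Fin n → κ) ℂ) (I : Finset (Fin n)) :
    marginal (r • M) I = r • marginal M I := by
  ext a b
  simp [marginal, Finset.smul_sum]

lemma marginal_sum {ι : Type*} (s : Finset ι) (M : ι → Matrix (Fin n → κ) (Fin n → κ) ℂ)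
    (I : Finset (Fin n)) : marginal (∑ i ∈ s, M i) I = ∑ i ∈ s, marginal (M i) I := by
  ext a b
  simp only [marginal, Matrix.sum_apply]
  exact Finset.sum_comm

lemma marginal_compl_singleton_apply (M : Matrix (Fin n → κ) (Fin n → κ) ℂ) (i : Fin n)
    (a b : {j // j ∈ ({i}ᶜ : Finset (Fin n))} → κ) :
    marginal M {i}ᶜ a b = ∑ x, M (fun j => if h : j ∈ ({i}ᶜ : Finset (Fin n)) then a ⟨j, h⟩ else x)
      (fun j => if h : j ∈ ({i}ᶜ : Finset (Fin n)) then b ⟨j, h⟩ else x) := by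
  let e : κ ≃ ({j // j ∉ ({i}ᶜ : Finset (Fin n))} → κ) :=
    { toFun := fun x _ => x
      invFun := fun f => f ⟨i, by simp⟩
      right_inv := fun f => funext fun j => by
        obtain ⟨j, hj⟩ := j
        obtain rfl : j = i := by simpa using hj
        rfl }
  exact (e.sum_comp _).symm

end Marginal

section Reset

variable {κ : Type*} [Fintype κ] [DecidableEq κ] {n : ℕ} (x₀ : κ)

/-- The channel `X ↦ |x₀⟩⟨x₀|ᵢ ⊗ Trᵢ X`. -/
def resetSite (i : Fin n) (X : Matrix (Fin n → κ) (Fin n → κ) ℂ) :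
    Matrix (Fin n → κ) (Fin n → κ) ℂ :=
  let P : Matrix (Fin n → κ) (Fin n → κ) ℂ := diagonal fun g => if g i = x₀ then 1 else 0
  P * (∑ x, X.submatrix (Function.update · i x) (Function.update · i x)) * Pᴴ

lemma resetSite_apply (i : Fin n) (X : Matrix (Fin n → κ) (Fin n → κ) ℂ) (g h : Fin n → κ) :
    resetSite x₀ i X g h =
      if g i = x₀ ∧ h i = x₀ then ∑ x, X (Function.update g i x) (Function.update h i x)
      else 0 := by
  by_cases hg : g i = x₀ <;> by_cases hh : h i = x₀ <;>
    simp [resetSite, diagonal_mul, mul_diagonal, Matrix.sum_apply, hg, hh]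

lemma posSemidef_resetSite {X : Matrix (Fin n → κ) (Fin n → κ) ℂ} (hX : X.PosSemidef)
    (i : Fin n) : (resetSite x₀ i X).PosSemidef :=
  (posSemidef_sum _ fun _ _ => hX.submatrix _).mul_mul_conjTranspose_same _

lemma marginal_resetSite (i : Fin n) (X : Matrix (Fin n → κ) (Fin n → κ) ℂ) :
    marginal (resetSite x₀ i X) {i}ᶜ = marginal X {i}ᶜ := by
  ext a b
  simp only [marginal_compl_singleton_apply, resetSite_apply, Finset.mem_compl,
    Finset.mem_singleton, not_true_eq_false, dite_false, and_self,
    Finset.sum_ite_eq', Finset.mem_univ, ↓reduceIte]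
  refine Finset.sum_congr rfl fun x _ => ?_
  congr 1 <;> funext j <;> by_cases hj : j = i <;> simp [hj]

lemma trace_resetSite (i : Fin n) (X : Matrix (Fin n → κ) (Fin n → κ) ℂ) :
    (resetSite x₀ i X).trace = X.trace := by
  rw [← trace_marginal _ {i}ᶜ, marginal_resetSite, trace_marginal]

def resetFirst : ℕ → Matrix (Fin n → κ) (Fin n → κ) ℂ → Matrix (Fin n → κ) (Fin n → κ) ℂ
  | 0, X => X
  | k + 1, X => if hk : k < n then resetSite x₀ ⟨k, hk⟩ (resetFirst k X) else resetFirst k X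

lemma posSemidef_resetFirst {X : Matrix (Fin n → κ) (Fin n → κ) ℂ} (hX : X.PosSemidef) (k : ℕ) :
    (resetFirst x₀ k X).PosSemidef := by
  induction k with
  | zero => exact hX
  | succ k ih =>
    rw [resetFirst]
    split_ifs
    exacts [posSemidef_resetSite x₀ ih _, ih]

lemma trace_resetFirst (k : ℕ) (X : Matrix (Fin n → κ) (Fin n → κ) ℂ) :
    (resetFirst x₀ k X).trace = X.trace := by
  induction k with
  | zero => rfl
  | succ k ih =>
    rw [resetFirst]
    split_ifs
    exacts [(trace_resetSite x₀ _ _).trans ih, ih]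

lemma IsState.resetFirst {X : Matrix (Fin n → κ) (Fin n → κ) ℂ} (hX : IsState X) (k : ℕ) :
    IsState (resetFirst x₀ k X) :=
  ⟨posSemidef_resetFirst x₀ hX.1 k, (trace_resetFirst x₀ k X).trans hX.2⟩

lemma marginal_resetFirst_succ (i : Fin n) (X : Matrix (Fin n → κ) (Fin n → κ) ℂ) :
    marginal (resetFirst x₀ (i + 1) X) {i}ᶜ = marginal (resetFirst x₀ i X) {i}ᶜ := by
  rw [resetFirst, dif_pos i.2]
  exact marginal_resetSite x₀ i _

lemma resetFirst_apply_eq_zero {k : ℕ} (X : Matrix (Fin n → κ) (Fin n → κ) ℂ) {g h : Fin n → κ}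
    {j : Fin n} (hj : (j : ℕ) < k) (hgh : g j ≠ x₀ ∨ h j ≠ x₀) : resetFirst x₀ k X g h = 0 := by
  induction k generalizing g h with
  | zero => omega
  | succ k ih =>
    rw [resetFirst]
    split_ifs with hk
    · rw [resetSite_apply]
      split_ifs with hx
      · obtain hjk | hjk := (Nat.lt_succ_iff_lt_or_eq.mp hj)
        · have hji : j ≠ ⟨k, hk⟩ := Fin.ne_of_val_ne hjk.ne
          refine Finset.sum_eq_zero fun x _ => ih hjk ?_
          simpa [Function.update_of_ne hji] using hgh
        · obtain rfl : j = ⟨k, hk⟩ := Fin.ext hjk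
          exact absurd hx (by tauto)
      · rfl
    · exact ih (by omega) hgh

/-- After all factors are reset, only the entry at `((x₀, …, x₀), (x₀, …, x₀))` survives. -/
lemma resetFirst_eq_of_trace_eq {X Y : Matrix (Fin n → κ) (Fin n → κ) ℂ}
    (h : X.trace = Y.trace) : resetFirst x₀ n X = resetFirst x₀ n Y := by
  have hvanish (Z : Matrix (Fin n → κ) (Fin n → κ) ℂ) (g h : Fin n → κ)
      (hgh : (g, h) ≠ (fun _ => x₀, fun _ => x₀)) : resetFirst x₀ n Z g h = 0 := by
    obtain ⟨j, hj⟩ : ∃ j, g j ≠ x₀ ∨ h j ≠ x₀ := by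
      by_contra! hc
      exact hgh (Prod.ext (funext fun j => (hc j).1) (funext fun j => (hc j).2))
    exact resetFirst_apply_eq_zero x₀ Z j.2 hj
  exact eq_of_trace_eq_of_apply_eq_zero _ (hvanish X) (hvanish Y)
    ((trace_resetFirst x₀ n X).trans (h.trans (trace_resetFirst x₀ n Y).symm))

end Reset

section Decomposition

variable {κ : Type*} [Fintype κ] [DecidableEq κ] {n : ℕ}

lemma exists_W1_decomposition (x₀ : κ) {ρ σ : Matrix (Fin n → κ) (Fin n → κ) ℂ}
    (hρ : IsState ρ) (hσ : IsState σ) :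
    ∃ (c : Fin n → ℝ) (τ η : Fin n → Matrix (Fin n → κ) (Fin n → κ) ℂ),
      (∀ i, 0 ≤ c i) ∧ (∀ i, IsState (τ i)) ∧ (∀ i, IsState (η i)) ∧
      (∀ i, marginal (τ i) ({i}ᶜ : Finset (Fin n)) = marginal (η i) ({i}ᶜ : Finset (Fin n))) ∧
      ρ - σ = ∑ i, c i • (τ i - η i) := by
  set H := resetFirst x₀ (n := n)
  refine ⟨fun _ => 2, fun i => (2⁻¹ : ℝ) • (H i ρ + H (i + 1) σ),
    fun i => (2⁻¹ : ℝ) • (H (i + 1) ρ + H i σ), fun _ => zero_le_two,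
    fun i => (hρ.resetFirst x₀ i).half_smul_add (hσ.resetFirst x₀ (i + 1)),
    fun i => (hρ.resetFirst x₀ (i + 1)).half_smul_add (hσ.resetFirst x₀ i), fun i => ?_, ?_⟩
  · simp only [marginal_smul, marginal_add, H, marginal_resetFirst_succ, add_comm]
  · have hstep (k : ℕ) : (2 : ℝ) • ((2⁻¹ : ℝ) • (H k ρ + H (k + 1) σ) -
        (2⁻¹ : ℝ) • (H (k + 1) ρ + H k σ)) = (H k ρ - H k σ) - (H (k + 1) ρ - H (k + 1) σ) := by
      rw [← smul_sub, smul_smul, mul_inv_cancel₀ two_ne_zero, one_smul]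
      abel
    simp only [hstep]
    rw [Fin.sum_univ_eq_sum_range (fun k => (H k ρ - H k σ) - (H (k + 1) ρ - H (k + 1) σ)),
      Finset.sum_range_sub']
    have hend : H n ρ = H n σ := resetFirst_eq_of_trace_eq x₀ (hρ.2.trans hσ.2.symm)
    rw [hend, sub_self, sub_zero]
    rfl

end Decomposition

section Combinatorics

open Finset

lemma sum_powersetCard_sum {α M : Type*} [DecidableEq α] [AddCommMonoid M] (s : Finset α)
    {k : ℕ} (hk : 1 ≤ k) (f : α → M) :
    ∑ t ∈ s.powersetCard k, ∑ i ∈ t, f i = (#s - 1).choose (k - 1) • ∑ i ∈ s, f i := by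
  rw [Finset.sum_comm' (t' := s) (s' := fun i => (s.powersetCard k).filter (i ∈ ·)), smul_sum]
  · refine sum_congr rfl fun i hi => ?_
    have h := card_filter_powersetCard_subset {i} s k (singleton_subset_iff.mpr hi) (by simpa)
    simp only [singleton_subset_iff, card_singleton] at h
    rw [sum_const, h]
  · intro t i
    simp only [mem_powersetCard, mem_filter]
    exact ⟨fun h => ⟨h, h.1.1 h.2⟩, fun h => h.1⟩

lemma choose_inv_mul_sum_powersetCard_sum {α : Type*} [DecidableEq α] (s : Finset α) {k : ℕ}
    (hk : k ∈ Icc 1 #s) (f : α → ℝ) :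
    ((#s).choose k : ℝ)⁻¹ * ∑ t ∈ s.powersetCard k, ∑ i ∈ t, f i = k / #s * ∑ i ∈ s, f i := by
  obtain ⟨hk1, hks⟩ := mem_Icc.mp hk
  have hchoose : (#s : ℝ) * (#s - 1).choose (k - 1) = (#s).choose k * k := by
    have := Nat.add_one_mul_choose_eq (#s - 1) (k - 1)
    rw [Nat.sub_add_cancel (hk1.trans hks), Nat.sub_add_cancel hk1] at this
    exact_mod_cast this
  have hpos : (0 : ℝ) < (#s).choose k := by exact_mod_cast Nat.choose_pos hks
  have hs : (0 : ℝ) < #s := by exact_mod_cast hk1.trans hks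
  rw [sum_powersetCard_sum s hk1, nsmul_eq_mul]
  field_simp
  linear_combination (∑ i ∈ s, f i) * hchoose

lemma sum_Icc_mul_inv_two_pow_le (n : ℕ) : ∑ k ∈ Icc 1 n, (k : ℝ) * (2 ^ k)⁻¹ ≤ 2 := by
  have h := hasSum_coe_mul_geometric_of_norm_lt_one (𝕜 := ℝ) (r := 2⁻¹) (by norm_num)
  norm_num at h
  simpa only [one_div, inv_pow] using sum_le_hasSum (Icc 1 n) (fun k _ => by positivity) h

end Combinatorics

section Bound

variable {κ : Type*} [Fintype κ] [DecidableEq κ] {n : ℕ}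

lemma traceNorm_marginal_le_of_decomposition {X : Matrix (Fin n → κ) (Fin n → κ) ℂ}
    {c : Fin n → ℝ} {τ η : Fin n → Matrix (Fin n → κ) (Fin n → κ) ℂ} (hc : ∀ i, 0 ≤ c i)
    (hτ : ∀ i, IsState (τ i)) (hη : ∀ i, IsState (η i))
    (hmarg : ∀ i, marginal (τ i) ({i}ᶜ : Finset (Fin n)) = marginal (η i) ({i}ᶜ : Finset (Fin n)))
    (hX : X = ∑ i, c i • (τ i - η i)) (I : Finset (Fin n)) :
    traceNorm (marginal X I) ≤ ∑ i ∈ I, 2 * c i := by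
  have hX' : marginal X I =
      ∑ i ∈ I, c i • marginal (τ i) I - ∑ i ∈ I, c i • marginal (η i) I := by
    have hoff (i : Fin n) (hi : i ∉ I) : marginal (τ i) I = marginal (η i) I :=
      marginal_eq_of_subset (Finset.subset_compl_singleton.mpr hi) (hmarg i)
    rw [← Finset.sum_sub_distrib, hX, marginal_sum, ← Finset.sum_subset (Finset.subset_univ I)
      fun i _ hi => by rw [marginal_smul, marginal_sub, hoff i hi, sub_self, smul_zero]]
    simp only [marginal_smul, marginal_sub, smul_sub]
  have hpsd (θ : Fin n → Matrix (Fin n → κ) (Fin n → κ) ℂ) (hθ : ∀ i, IsState (θ i)) :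
      (∑ i ∈ I, c i • marginal (θ i) I).PosSemidef :=
    posSemidef_sum I fun i _ => ((hθ i).marginal I).1.smul (hc i)
  rw [hX']
  refine (traceNorm_sub_le (hpsd τ hτ) (hpsd η hη)).trans_eq ?_
  rw [re_trace_sum_smul_of_isState I c fun i _ => (hτ i).marginal I,
    re_trace_sum_smul_of_isState I c fun i _ => (hη i).marginal I, ← Finset.sum_add_distrib]
  exact Finset.sum_congr rfl fun i _ => (two_mul _).symm

lemma LV_le_of_traceNorm_marginal_le {X : Matrix (Fin n → κ) (Fin n → κ) ℂ} {w : Fin n → ℝ}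
    (hw : ∀ i, 0 ≤ w i) (h : ∀ I, traceNorm (marginal X I) ≤ ∑ i ∈ I, w i) :
    LV X ≤ (∑ i, w i) / n := by
  have hW : 0 ≤ ∑ i, w i := Finset.sum_nonneg fun i _ => hw i
  have hlevel (k : ℕ) (hk : k ∈ Finset.Icc 1 n) :
      (n.choose k : ℝ)⁻¹ * ∑ I ∈ Finset.powersetCard k Finset.univ, traceNorm (marginal X I) ≤
        k / n * ∑ i, w i := by
    calc _ ≤ (n.choose k : ℝ)⁻¹ * ∑ I ∈ Finset.powersetCard k Finset.univ, ∑ i ∈ I, w i := by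
          gcongr with I; exact h I
      _ = k / n * ∑ i, w i := by
          simpa using choose_inv_mul_sum_powersetCard_sum Finset.univ (by simpa using hk) w
  calc LV X ≤ 1 / 2 * ∑ k ∈ Finset.Icc 1 n, ((2 : ℝ) ^ k)⁻¹ * (k / n * ∑ i, w i) := by
        unfold LV
        refine mul_le_mul_of_nonneg_left (Finset.sum_le_sum fun k hk => ?_) (by norm_num)
        exact mul_le_mul_of_nonneg_left (hlevel k hk) (by positivity)
    _ = (∑ i, w i) / n * (1 / 2 * ∑ k ∈ Finset.Icc 1 n, (k : ℝ) * (2 ^ k)⁻¹) := by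
        rw [Finset.mul_sum, Finset.mul_sum, Finset.mul_sum]
        refine Finset.sum_congr rfl fun k _ => by ring
    _ ≤ (∑ i, w i) / n :=
        mul_le_of_le_one_right (div_nonneg hW n.cast_nonneg)
          (by linarith [sum_Icc_mul_inv_two_pow_le n])

end Bound

/-- The local variation distance is bounded by the normalised
Wasserstein distance: `‖ρ − σ‖_{LV} ≤ (2/n)·‖ρ − σ‖_{W1}`. -/
theorem LV_le_W1
    {d : ℕ} {n : ℕ} (hn : 1 ≤ n)
    (ρ σ : Matrix (Fin n → Fin d) (Fin n → Fin d) ℂ)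
    (hρ : IsState ρ) (hσ : IsState σ) :
    LV (ρ - σ) ≤ (2 / (n : ℝ)) * W1 (ρ - σ) := by
  obtain ⟨g, -, -⟩ := Finset.exists_ne_zero_of_sum_ne_zero (hρ.2.trans_ne one_ne_zero)
  have hn' : (0 : ℝ) < 2 / n := by positivity
  rw [W1, ← div_le_iff₀' hn']
  refine le_csInf ?_ ?_
  · obtain ⟨c, τ, η, hc, hτ, hη, hmarg, hX⟩ := exists_W1_decomposition (g ⟨0, hn⟩) hρ hσ
    exact ⟨_, c, τ, η, hc, hτ, hη, hmarg, hX, rfl⟩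
  · rintro _ ⟨c, τ, η, hc, hτ, hη, hmarg, hX, rfl⟩
    rw [div_le_iff₀' hn']
    calc LV (ρ - σ) ≤ (∑ i, 2 * c i) / n :=
          LV_le_of_traceNorm_marginal_le (fun i => mul_nonneg zero_le_two (hc i))
            (traceNorm_marginal_le_of_decomposition hc hτ hη hmarg hX)
      _ = 2 / n * ∑ i, c i := by rw [← Finset.mul_sum]; ring

end AlmostIID
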